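/- Let S = ∅ (full-dimensional box uncertainty). Then z(u) = Du + r with D_{[h],·} = 0 is an AAR solution of the uncertain LCP if and only if there is a set J ⊆ [n]∖[h] such that: D_J = -(M_J)^{-1}, D_{J,i} = 0 and D_{i,·} = 0 and r_i = 0 for all i ∉ J, r_J = -(M_J)^{-1} q̄_J, and moreover (a) M_J is invertible, (b) -(M_J)^{-1}(q̄_J + u_J) ≥ 0 for all u ∈ 𝒰, (c) -M_{N,J}(M_J)^{-1}(q̄_J + u_J) + q̄_N + u_N ≥ 0 for all u ∈ 𝒰, where N = [n]∖J. -/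

import Mathlib

open Matrix BigOperators
open scoped Classical

noncomputable section

/-- `u` lies in the box `[-ū, ū]`. -/
def inBox {n : ℕ} (ubar u : Fin n → ℝ) : Prop :=
  ∀ i, -ubar i ≤ u i ∧ u i ≤ ubar i

/-- `z` solves the LCP with matrix `M` and vector `q`. -/
def IsLCPSol {n : ℕ} (M : Matrix (Fin n) (Fin n) ℝ) (q z : Fin n → ℝ) : Prop :=
  (∀ i, 0 ≤ z i) ∧ (∀ i, 0 ≤ (M.mulVec z + q) i) ∧
    ∑ i, z i * (M.mulVec z + q) i = 0

/-- `z(u) = D u + r` is an affinely adjustable robust solution of the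
uncertain LCP with vector `q(u) = q̄ + u`. -/
def IsAAR {n : ℕ} (M : Matrix (Fin n) (Fin n) ℝ) (qbar ubar : Fin n → ℝ)
    (D : Matrix (Fin n) (Fin n) ℝ) (r : Fin n → ℝ) : Prop :=
  ∀ u, inBox ubar u → IsLCPSol M (qbar + u) (D.mulVec u + r)

/-- The principal submatrix of `M` indexed by the finset `J`. -/
def subM {n : ℕ} (M : Matrix (Fin n) (Fin n) ℝ) (J : Finset (Fin n)) :
    Matrix J J ℝ :=
  Matrix.of fun i j => M i.1 j.1

/-- The subvector of `q` indexed by `J`. -/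
def subV {n : ℕ} (q : Fin n → ℝ) (J : Finset (Fin n)) : J → ℝ :=
  fun i => q i.1

/-! For each coordinate `i`, both `zᵢ(u) = (D u + r)ᵢ` and `wᵢ(u) = (M z(u) + q̄ + u)ᵢ` are
affine in `u`, and complementarity makes their product vanish on the box. The box is convex, so
one factor vanishes on all of it, and it is full-dimensional, so that factor vanishes identically.
With `J` the set of `i` for which `zᵢ` does not vanish identically, the rows of `M D + I` and of
`M r + q̄` indexed by `J` vanish; this says `M_J (-D_{J,·}) = I_{J,·}` and `M_J r_J = -q̄_J`, which
forces `M_J` to be invertible and pins down `D` and `r`. Conversely, for `D` and `r` of this form,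
`z` vanishes off `J` and `w` vanishes on `J`, so the LCP conditions reduce to (b) and (c). -/

section AffineDichotomy

variable {E : Type*} [AddCommGroup E] [Module ℝ E]

theorem forall_eq_zero_or_forall_eq_zero_of_mul_eq_zero {s : Set E} (hs : Convex ℝ s)
    (f g : E →ᵃ[ℝ] ℝ) (hfg : ∀ u ∈ s, f u * g u = 0) :
    (∀ u ∈ s, f u = 0) ∨ (∀ u ∈ s, g u = 0) := by
  by_contra! ⟨⟨u, hu, hfu⟩, ⟨v, hv, hgv⟩⟩
  have hgu : g u = 0 := (mul_eq_zero.mp (hfg u hu)).resolve_left hfu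
  have hfv : f v = 0 := (mul_eq_zero.mp (hfg v hv)).resolve_right hgv
  have hmid := hfg _ (hs.midpoint_mem hu hv)
  rw [f.map_midpoint, g.map_midpoint, hgu, hfv] at hmid
  simp [midpoint_eq_smul_add, hfu, hgv] at hmid

end AffineDichotomy

theorem inBox_iff_mem_Icc {n : ℕ} {ubar u : Fin n → ℝ} :
    inBox ubar u ↔ u ∈ Set.Icc (-ubar) ubar := by
  simp [inBox, Pi.le_def, forall_and]

theorem eq_zero_of_dotProduct_add_eq_zero_on_Icc {ι : Type*} [Fintype ι] [DecidableEq ι]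
    {ubar : ι → ℝ} (hubar : ∀ i, 0 < ubar i) {a : ι → ℝ} {c : ℝ}
    (h : ∀ u ∈ Set.Icc (-ubar) ubar, a ⬝ᵥ u + c = 0) : a = 0 ∧ c = 0 := by
  have hubar0 : 0 ≤ ubar := fun i => (hubar i).le
  have hc : c = 0 := by simpa using h 0 ⟨neg_nonpos.mpr hubar0, hubar0⟩
  refine ⟨funext fun j => ?_, hc⟩
  have hj : Pi.single j (ubar j) ∈ Set.Icc (-ubar) ubar := by
    constructor <;> intro i <;> by_cases hij : i = j <;> simp [hij, (hubar i).le, (hubar j).le]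
  have := h _ hj
  rw [hc, add_zero, dotProduct_single] at this
  simpa [(hubar j).ne'] using this

section LCP

variable {n : ℕ} {M : Matrix (Fin n) (Fin n) ℝ}

theorem isLCPSol_iff {q z : Fin n → ℝ} :
    IsLCPSol M q z ↔
      (∀ i, 0 ≤ z i) ∧ (∀ i, 0 ≤ (M *ᵥ z + q) i) ∧ ∀ i, z i * (M *ᵥ z + q) i = 0 := by
  refine and_congr_right fun hz => and_congr_right fun hw => ?_
  rw [Finset.sum_eq_zero_iff_of_nonneg fun i _ => mul_nonneg (hz i) (hw i)]
  simp only [Finset.mem_univ, true_implies]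

theorem mulVec_mulVec_add_add (D : Matrix (Fin n) (Fin n) ℝ) (qbar r u : Fin n → ℝ) :
    M *ᵥ (D *ᵥ u + r) + (qbar + u) = (M * D + 1) *ᵥ u + (M *ᵥ r + qbar) := by
  rw [mulVec_add, mulVec_mulVec, add_mulVec, one_mulVec]
  abel

theorem IsAAR.row_eq_zero_or {qbar ubar : Fin n → ℝ} (hubar : ∀ i, 0 < ubar i)
    {D : Matrix (Fin n) (Fin n) ℝ} {r : Fin n → ℝ} (hAAR : IsAAR M qbar ubar D r) (i : Fin n) :
    (D i = 0 ∧ r i = 0) ∨ ((M * D + 1) i = 0 ∧ (M *ᵥ r + qbar) i = 0) := by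
  let z : (Fin n → ℝ) →ᵃ[ℝ] ℝ := (dotProductBilin ℝ ℝ (D i)).toAffineMap + AffineMap.const ℝ _ (r i)
  let w : (Fin n → ℝ) →ᵃ[ℝ] ℝ :=
    (dotProductBilin ℝ ℝ ((M * D + 1) i)).toAffineMap + AffineMap.const ℝ _ ((M *ᵥ r + qbar) i)
  have hzw : ∀ u ∈ Set.Icc (-ubar) ubar, z u * w u = 0 := fun u hu => by
    have := (isLCPSol_iff.mp (hAAR u (inBox_iff_mem_Icc.mpr hu))).2.2 i
    rwa [mulVec_mulVec_add_add] at this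
  refine (forall_eq_zero_or_forall_eq_zero_of_mul_eq_zero (convex_Icc _ _) z w hzw).imp ?_ ?_
  · exact eq_zero_of_dotProduct_add_eq_zero_on_Icc hubar
  · exact eq_zero_of_dotProduct_add_eq_zero_on_Icc hubar

theorem IsAAR.exists_rows_eq_zero {qbar ubar : Fin n → ℝ} (hubar : ∀ i, 0 < ubar i)
    {D : Matrix (Fin n) (Fin n) ℝ} {r : Fin n → ℝ} (hAAR : IsAAR M qbar ubar D r) :
    ∃ J : Finset (Fin n), (∀ i ∉ J, D i = 0) ∧ (∀ i ∉ J, r i = 0) ∧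
      (∀ i ∈ J, (M * D + 1) i = 0) ∧ ∀ i ∈ J, (M *ᵥ r + qbar) i = 0 := by
  have hon (i : Fin n) (hi : ¬(D i = 0 ∧ r i = 0)) :=
    (hAAR.row_eq_zero_or hubar i).resolve_left hi
  refine ⟨Finset.univ.filter fun i => ¬(D i = 0 ∧ r i = 0), ?_, ?_, ?_, ?_⟩ <;>
    intro i hi <;> simp only [Finset.mem_filter, Finset.mem_univ, true_and, not_not] at hi
  exacts [hi.1, hi.2, (hon i hi).1, (hon i hi).2]

end LCP

theorem Matrix.eq_nonsing_inv_mulVec_of_mulVec_eq {ι R : Type*} [Fintype ι] [DecidableEq ι]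
    [CommRing R] {A : Matrix ι ι R} (hA : IsUnit A.det) {x b : ι → R} (h : A *ᵥ x = b) :
    x = A⁻¹ *ᵥ b := by
  rw [← h, mulVec_mulVec, nonsing_inv_mul _ hA, one_mulVec]

theorem Fintype.sum_eq_sum_coe_sort_of_eq_zero {ι R : Type*} [Fintype ι] [AddCommMonoid R]
    (s : Finset ι) {f : ι → R} (hf : ∀ k ∉ s, f k = 0) : ∑ k, f k = ∑ k : s, f k := by
  rw [Finset.sum_coe_sort s f]
  exact (Finset.sum_subset (Finset.subset_univ s) fun k _ hk => hf k hk).symm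

section Block

variable {n : ℕ} {M D : Matrix (Fin n) (Fin n) ℝ} {J : Finset (Fin n)}

theorem subM_mulVec_subV {x : Fin n → ℝ} (hx : ∀ k ∉ J, x k = 0) :
    subM M J *ᵥ subV x J = subV (M *ᵥ x) J :=
  funext fun i => (Fintype.sum_eq_sum_coe_sort_of_eq_zero J (f := fun k => M i k * x k)
    fun k hk => by simp [hx k hk]).symm

theorem subM_mulVec_subV_col (hDoff : ∀ i ∉ J, D i = 0) (hDon : ∀ i ∈ J, (M * D + 1) i = 0)
    (j : Fin n) :
    subM M J *ᵥ subV (fun k => D k j) J =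
      -subV (fun k => (1 : Matrix (Fin n) (Fin n) ℝ) k j) J := by
  rw [subM_mulVec_subV fun k hk => congrFun (hDoff k hk) j]
  funext i
  exact eq_neg_of_add_eq_zero_left (congrFun (hDon i i.2) j)

theorem subM_mul_neg_eq_one (hDoff : ∀ i ∉ J, D i = 0) (hDon : ∀ i ∈ J, (M * D + 1) i = 0) :
    subM M J * -Matrix.of (fun i j : J => D i j) = 1 := by
  rw [mul_neg, neg_eq_iff_eq_neg]
  ext i j
  have := congrFun (subM_mulVec_subV_col hDoff hDon j) i
  simp only [subV, Pi.neg_apply, mulVec, dotProduct, one_apply] at this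
  rw [mul_apply, neg_apply, one_apply]
  simpa only [of_apply, Subtype.ext_iff] using this

theorem inv_subM_eq (hDoff : ∀ i ∉ J, D i = 0) (hDon : ∀ i ∈ J, (M * D + 1) i = 0) :
    (subM M J)⁻¹ = -Matrix.of fun i j : J => D i j :=
  inv_eq_right_inv (subM_mul_neg_eq_one hDoff hDon)

theorem apply_eq_zero_of_notMem (hDoff : ∀ i ∉ J, D i = 0)
    (hDon : ∀ i ∈ J, (M * D + 1) i = 0) (i : J) {j : Fin n} (hj : j ∉ J) : D i j = 0 := by
  have hcol : subM M J *ᵥ subV (fun k => D k j) J = 0 := by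
    rw [subM_mulVec_subV_col hDoff hDon, neg_eq_zero]
    funext k
    simp [subV, one_apply, ne_of_mem_of_not_mem k.2 hj]
  have hA := isUnit_det_of_right_inverse (subM_mul_neg_eq_one hDoff hDon)
  simpa [subV] using congrFun (eq_nonsing_inv_mulVec_of_mulVec_eq hA hcol) i

theorem subV_eq_neg_nonsing_inv_mulVec {qbar r : Fin n → ℝ} (hA : IsUnit (subM M J).det)
    (hroff : ∀ i ∉ J, r i = 0) (hron : ∀ i ∈ J, (M *ᵥ r + qbar) i = 0) (i : J) :
    r i = -((subM M J)⁻¹ *ᵥ subV qbar J) i := by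
  have h : subM M J *ᵥ subV r J = -subV qbar J := by
    rw [subM_mulVec_subV hroff]
    funext i
    exact eq_neg_of_add_eq_zero_left (hron i i.2)
  rw [← Pi.neg_apply, ← mulVec_neg]
  exact congrFun (eq_nonsing_inv_mulVec_of_mulVec_eq hA h) i

theorem row_ne_zero_of_mem (hA : IsUnit (subM M J).det)
    (hD : ∀ i j : J, D i j = -((subM M J)⁻¹ i j)) (i : J) : D i ≠ 0 := by
  intro hi
  have hinv := isUnit_nonsing_inv_det _ hA
  rw [det_eq_zero_of_row_eq_zero i fun j => by simpa [hi] using hD i j] at hinv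
  exact not_isUnit_zero hinv

end Block

section BlockForm

variable {n : ℕ} {M D : Matrix (Fin n) (Fin n) ℝ} {qbar r : Fin n → ℝ} {J : Finset (Fin n)}

theorem subV_mulVec_add (hD1 : ∀ i j : J, D i j = -((subM M J)⁻¹ i j))
    (hD2 : ∀ (i : J) (j : Fin n), j ∉ J → D i j = 0)
    (hrJ : ∀ i : J, r i = -((subM M J)⁻¹ *ᵥ subV qbar J) i) (u : Fin n → ℝ) :
    subV (D *ᵥ u + r) J = -((subM M J)⁻¹ *ᵥ subV (qbar + u) J) := by
  have hDu : subV (D *ᵥ u) J = -((subM M J)⁻¹ *ᵥ subV u J) := funext fun i => by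
    rw [subV, mulVec, dotProduct, Fintype.sum_eq_sum_coe_sort_of_eq_zero J
      (f := fun k => D i k * u k) fun k hk => by simp [hD2 i k hk]]
    simp [mulVec, dotProduct, hD1, subV]
  have hr : subV r J = -((subM M J)⁻¹ *ᵥ subV qbar J) := funext hrJ
  calc subV (D *ᵥ u + r) J = subV (D *ᵥ u) J + subV r J := rfl
    _ = -((subM M J)⁻¹ *ᵥ subV (qbar + u) J) := by
      rw [hDu, hr, ← neg_add, ← mulVec_add, add_comm]
      rfl

theorem isLCPSol_mulVec_add_iff (hA : IsUnit (subM M J).det)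
    (hD1 : ∀ i j : J, D i j = -((subM M J)⁻¹ i j))
    (hD2 : ∀ (i : J) (j : Fin n), j ∉ J → D i j = 0)
    (hD3 : ∀ i : Fin n, i ∉ J → ∀ j, D i j = 0) (hr0 : ∀ i : Fin n, i ∉ J → r i = 0)
    (hrJ : ∀ i : J, r i = -((subM M J)⁻¹ *ᵥ subV qbar J) i) (u : Fin n → ℝ) :
    IsLCPSol M (qbar + u) (D *ᵥ u + r) ↔
      (∀ i : J, 0 ≤ -((subM M J)⁻¹ *ᵥ subV (qbar + u) J) i) ∧
      ∀ i ∉ J, 0 ≤ -(∑ j : J, M i j * ((subM M J)⁻¹ *ᵥ subV (qbar + u) J) j) + qbar i + u i := by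
  set x := (subM M J)⁻¹ *ᵥ subV (qbar + u) J
  set z := D *ᵥ u + r
  have hzN : ∀ i ∉ J, z i = 0 := fun i hi => by simp [z, mulVec, dotProduct, hD3 i hi, hr0 i hi]
  have hzJ : subV z J = -x := subV_mulVec_add hD1 hD2 hrJ u
  have hz : ∀ i : J, z i = -x i := congrFun hzJ
  have hwN : ∀ i, (M *ᵥ z + (qbar + u)) i = -(∑ k : J, M i k * x k) + qbar i + u i := by
    intro i
    rw [Pi.add_apply, mulVec, dotProduct, Fintype.sum_eq_sum_coe_sort_of_eq_zero J
      (f := fun k => M i k * z k) fun k hk => by simp [hzN k hk]]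
    simp only [hz, mul_neg, Finset.sum_neg_distrib, Pi.add_apply]
    ring
  have hwJ : ∀ i : J, (M *ᵥ z + (qbar + u)) i = 0 := by
    have hw : subV (M *ᵥ z + (qbar + u)) J = 0 := by
      rw [show subV (M *ᵥ z + (qbar + u)) J = subV (M *ᵥ z) J + subV (qbar + u) J from rfl,
        ← subM_mulVec_subV hzN, hzJ, mulVec_neg, mulVec_mulVec, mul_nonsing_inv _ hA,
        one_mulVec, neg_add_cancel]
    exact congrFun hw
  rw [isLCPSol_iff]
  constructor
  · rintro ⟨hz_nonneg, hw_nonneg, -⟩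
    exact ⟨fun i => hz i ▸ hz_nonneg i, fun i _ => hwN i ▸ hw_nonneg i⟩
  · rintro ⟨hb, hc⟩
    refine ⟨fun i => ?_, fun i => ?_, fun i => ?_⟩ <;> by_cases hi : i ∈ J
    · exact (hz ⟨i, hi⟩).symm ▸ hb ⟨i, hi⟩
    · exact (hzN i hi).symm ▸ le_rfl
    · exact (hwJ ⟨i, hi⟩).symm ▸ le_rfl
    · exact (hwN i).symm ▸ hc i hi
    · rw [hwJ ⟨i, hi⟩, mul_zero]
    · rw [hzN i hi, zero_mul]

end BlockForm

/-- full characterization of AAR solutions for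
full-dimensional box uncertainty (`S = ∅`). -/
theorem stmt_7 (n h : ℕ) (M : Matrix (Fin n) (Fin n) ℝ) (qbar ubar : Fin n → ℝ)
    (hubar : ∀ i, 0 < ubar i)
    (D : Matrix (Fin n) (Fin n) ℝ) (r : Fin n → ℝ)
    (hDh : ∀ i : Fin n, (i : ℕ) < h → ∀ j, D i j = 0) :
    IsAAR M qbar ubar D r ↔
      ∃ J : Finset (Fin n),
        (∀ i ∈ J, h ≤ (i : ℕ)) ∧
        -- D and r are given by the formulas
        (∀ i j : J, D i.1 j.1 = -((subM M J)⁻¹ i j)) ∧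
        (∀ (i : J) (j : Fin n), j ∉ J → D i.1 j = 0) ∧
        (∀ i : Fin n, i ∉ J → ∀ j, D i j = 0) ∧
        (∀ i : Fin n, i ∉ J → r i = 0) ∧
        (∀ i : J, r i.1 = -((subM M J)⁻¹.mulVec (subV qbar J)) i) ∧
        -- (a) `M_J` is invertible
        IsUnit (subM M J).det ∧
        -- (b) `-(M_J)⁻¹ q_J(u) ≥ 0` for all `u ∈ 𝒰`
        (∀ u, inBox ubar u → ∀ i : J,
          0 ≤ -((subM M J)⁻¹.mulVec (fun j : J => qbar j.1 + u j.1)) i) ∧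
        -- (c) `-M_{N,J}(M_J)⁻¹ q_J(u) + q_N(u) ≥ 0` for all `u ∈ 𝒰`
        (∀ u, inBox ubar u → ∀ i : Fin n, i ∉ J →
          0 ≤ -(∑ j : J,
              M i j.1 * ((subM M J)⁻¹.mulVec (fun l : J => qbar l.1 + u l.1)) j)
            + qbar i + u i) := by
  constructor
  · intro hAAR
    obtain ⟨J, hDoff, hr0, hDon, hron⟩ := hAAR.exists_rows_eq_zero hubar
    have hA := isUnit_det_of_right_inverse (subM_mul_neg_eq_one hDoff hDon)
    have hD1 : ∀ i j : J, D i j = -((subM M J)⁻¹ i j) := by simp [inv_subM_eq hDoff hDon]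
    have hD2 (i : J) (j : Fin n) (hj : j ∉ J) := apply_eq_zero_of_notMem hDoff hDon i hj
    have hD3 (i : Fin n) (hi : i ∉ J) := congrFun (hDoff i hi)
    have hrJ := subV_eq_neg_nonsing_inv_mulVec hA hr0 hron
    have hJh (i : Fin n) (hi : i ∈ J) : h ≤ i :=
      not_lt.mp fun hlt => row_ne_zero_of_mem hA hD1 ⟨i, hi⟩ (funext (hDh i hlt))
    have hsol (u : Fin n → ℝ) (hu : inBox ubar u) :=
      (isLCPSol_mulVec_add_iff hA hD1 hD2 hD3 hr0 hrJ u).mp (hAAR u hu)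
    exact ⟨J, hJh, hD1, hD2, hD3, hr0, hrJ, hA, fun u hu => (hsol u hu).1,
      fun u hu => (hsol u hu).2⟩
  · rintro ⟨J, -, hD1, hD2, hD3, hr0, hrJ, hA, hb, hc⟩ u hu
    exact (isLCPSol_mulVec_add_iff hA hD1 hD2 hD3 hr0 hrJ u).mpr ⟨hb u hu, hc u hu⟩
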